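/- For every graph G with no isolated vertex, F(G) <= F_t(G) <= 2 F(G), and the upper bound is attained: for the disjoint union of k paths each of order at least 2, F(G) = k and F_t(G) = 2k. -/

import Mathlib

open SimpleGraph

/-- The set of vertices colored after `n` steps of the zero forcing process
starting from the initially colored set `F`. -/
def coloredAt {V : Type*} (G : SimpleGraph V) (F : Set V) : ℕ → Set V
  | 0 => F
  | n + 1 => coloredAt G F n ∪
      {w | ∃ u ∈ coloredAt G F n, G.Adj u w ∧
        ∀ x, G.Adj u x → x ≠ w → x ∈ coloredAt G F n}

/-- `F` is a zero forcing set of `G`. -/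
def IsForcingSet {V : Type*} (G : SimpleGraph V) (F : Set V) : Prop :=
  ∀ v, ∃ n, v ∈ coloredAt G F n

/-- The zero forcing number of `G`. -/
noncomputable def forcingNumber {V : Type*} (G : SimpleGraph V) [Fintype V] : ℕ :=
  sInf {k | ∃ F : Finset V, F.card = k ∧ IsForcingSet G ↑F}

/-- The step at which `v` gets colored. -/
noncomputable def kF {V : Type*} (G : SimpleGraph V) (F : Set V) (v : V) : ℕ :=
  sInf {n | v ∈ coloredAt G F n}

/-- `u` forces `w` in the forcing process started at `F`. -/
def Forces {V : Type*} (G : SimpleGraph V) (F : Set V) (u w : V) : Prop :=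
  G.Adj u w ∧ kF G F u < kF G F w ∧
    ∀ x, G.Adj u x → x ≠ w → kF G F x < kF G F w

/-- A chain set corresponding to the forcing set `F`: a partition of the vertex
set into `k` sequences, each starting at a vertex of `F`, in which every vertex
forces its successor. -/
def IsChainSet {V : Type*} {k : ℕ} (G : SimpleGraph V) (F : Set V)
    (R : Fin k → List V) : Prop :=
  (∀ i, R i ≠ []) ∧
  (∀ i (h : R i ≠ []), (R i).head h ∈ F) ∧
  (∀ i, (R i).Chain' (Forces G F)) ∧
  (∀ i, (R i).Nodup) ∧
  (∀ i j, i ≠ j → ∀ v, v ∈ R i → v ∉ R j) ∧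
  (∀ v, ∃ i, v ∈ R i)

/-- `u` precedes `v` in the chain (list) `L`. -/
def Precedes {V : Type*} (L : List V) (u v : V) : Prop :=
  ∃ p q : Fin L.length, (p : ℕ) < (q : ℕ) ∧ L.get p = u ∧ L.get q = v

/-- `v` has two non-consecutive neighbors in the list `L`. -/
def TwoNonconsecNbrs {V : Type*} (G : SimpleGraph V) (L : List V) (v : V) : Prop :=
  ∃ p q : Fin L.length, (p : ℕ) + 1 < (q : ℕ) ∧
    G.Adj v (L.get p) ∧ G.Adj v (L.get q)

/-- `F` is a total forcing set: a zero forcing set inducing a subgraph with no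
isolated vertex. -/
def IsTotalForcingSet {V : Type*} (G : SimpleGraph V) (F : Set V) : Prop :=
  IsForcingSet G F ∧ ∀ v ∈ F, ∃ u ∈ F, G.Adj u v

/-- The total forcing number of `G`. -/
noncomputable def totalForcingNumber {V : Type*} (G : SimpleGraph V) [Fintype V] : ℕ :=
  sInf {m | ∃ F : Finset V, F.card = m ∧ IsTotalForcingSet G ↑F}

/-- `A` is a real symmetric matrix whose off-diagonal nonzero pattern is the
adjacency of `G`. -/
def MatrixOfGraph {V : Type*} (G : SimpleGraph V) (A : Matrix V V ℝ) : Prop :=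
  A.IsSymm ∧ ∀ i j, i ≠ j → (A i j ≠ 0 ↔ G.Adj i j)

/-- The maximum nullity `M(G)` of `G`. -/
noncomputable def maxNullity {V : Type*} (G : SimpleGraph V) [Fintype V] : ℕ :=
  sSup {m | ∃ A : Matrix V V ℝ, MatrixOfGraph G A ∧ Fintype.card V - A.rank = m}

/-- The disjoint union of `k` paths, the `i`-th of order `n i`. -/
def disjointPaths (k : ℕ) (n : Fin k → ℕ) : SimpleGraph (Σ i, Fin (n i)) :=
  SimpleGraph.fromRel (fun a b => a.1 = b.1 ∧ (a.2 : ℕ) + 1 = (b.2 : ℕ))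

lemma coloredAt_mono {V : Type*} (G : SimpleGraph V) {F F' : Set V} (h : F ⊆ F') :
    ∀ m, coloredAt G F m ⊆ coloredAt G F' m := by
  intro m
  induction m with
  | zero => exact h
  | succ m ih =>
    rintro v (hv | ⟨u, hu, hadj, hall⟩)
    · exact Or.inl (ih hv)
    · exact Or.inr ⟨u, ih hu, hadj, fun x hx hxv => ih (hall x hx hxv)⟩

lemma isForcingSet_mono {V : Type*} (G : SimpleGraph V) {F F' : Set V} (h : F ⊆ F')
    (hF : IsForcingSet G F) : IsForcingSet G F' := by
  intro v
  obtain ⟨m, hm⟩ := hF v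
  exact ⟨m, coloredAt_mono G h m hm⟩

lemma disjointPaths_adj {k : ℕ} {n : Fin k → ℕ} {a b : Σ i, Fin (n i)} :
    (disjointPaths k n).Adj a b ↔ a ≠ b ∧
      ((a.1 = b.1 ∧ (a.2 : ℕ) + 1 = (b.2 : ℕ)) ∨ (b.1 = a.1 ∧ (b.2 : ℕ) + 1 = (a.2 : ℕ))) := by
  simp [disjointPaths, SimpleGraph.fromRel_adj]

lemma disjointPaths_adj_fst {k : ℕ} {n : Fin k → ℕ} {a b : Σ i, Fin (n i)}
    (h : (disjointPaths k n).Adj a b) : a.1 = b.1 := by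
  rw [disjointPaths_adj] at h
  rcases h.2 with ⟨h1, _⟩ | ⟨h1, _⟩
  · exact h1
  · exact h1.symm

lemma forcing_hits {k : ℕ} {n : Fin k → ℕ} {F : Set (Σ i, Fin (n i))}
    (hF : IsForcingSet (disjointPaths k n) F) (i : Fin k) (hi : 0 < n i) :
    ∃ v ∈ F, v.1 = i := by
  by_contra hcon
  push_neg at hcon
  have key : ∀ m, ∀ w ∈ coloredAt (disjointPaths k n) F m, w.1 ≠ i := by
    intro m
    induction m with
    | zero => exact fun w hw => hcon w hw
    | succ m ih =>
      rintro w (hw | ⟨u, hu, hadj, -⟩)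
      · exact ih w hw
      · rw [← disjointPaths_adj_fst hadj]; exact ih u hu
  obtain ⟨m, hm⟩ := hF (⟨i, ⟨0, hi⟩⟩ : Σ i, Fin (n i))
  exact key m _ hm rfl

lemma paths_forced {k : ℕ} {n : Fin k → ℕ} {F : Set (Σ i, Fin (n i))}
    (hF : ∀ i (h : 0 < n i), (⟨i, ⟨0, h⟩⟩ : Σ i, Fin (n i)) ∈ F) :
    IsForcingSet (disjointPaths k n) F := by
  have key : ∀ m (i : Fin k) (j : Fin (n i)), (j : ℕ) ≤ m →
      (⟨i, j⟩ : Σ i, Fin (n i)) ∈ coloredAt (disjointPaths k n) F m := by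
    intro m
    induction m with
    | zero =>
      intro i j hj
      have hj0 : (j : ℕ) = 0 := Nat.le_zero.mp hj
      have hpos : 0 < n i := hj0 ▸ j.isLt
      have hje : j = ⟨0, hpos⟩ := Fin.ext hj0
      rw [hje]; exact hF i hpos
    | succ m ih =>
      intro i j hj
      rcases Nat.lt_or_ge (j : ℕ) (m + 1) with h | h
      · exact Or.inl (ih i j (Nat.lt_succ_iff.mp h))
      · have hjm : (j : ℕ) = m + 1 := le_antisymm hj h
        have hmlt : m < n i := lt_trans (by omega) j.isLt
        set u : Σ i, Fin (n i) := ⟨i, ⟨m, hmlt⟩⟩ with hu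
        refine Or.inr ⟨u, ih i ⟨m, hmlt⟩ (le_refl m), ?_, ?_⟩
        · rw [disjointPaths_adj]
          refine ⟨?_, Or.inl ⟨rfl, by simp [u, hjm]⟩⟩
          intro hequ
          have : (m : ℕ) = (j : ℕ) := congrArg (fun x => (x.2 : ℕ)) hequ
          omega
        · intro x hx hxj
          rw [disjointPaths_adj] at hx
          obtain ⟨hne, hrel⟩ := hx
          rcases hrel with ⟨h1, h2⟩ | ⟨h1, h2⟩
          · exfalso
            apply hxj
            obtain ⟨xi, xj⟩ := x
            simp only [hu] at h1
            cases h1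
            have hxe : xj = j := Fin.ext (by simp only [u] at h2; omega)
            exact congrArg (Sigma.mk i) hxe
          · obtain ⟨xi, xj⟩ := x
            simp only [hu] at h1
            cases h1.symm
            simp only [u] at h2
            exact ih _ xj (by omega)
  intro v
  exact ⟨(v.2 : ℕ), by cases v with | mk i j => exact key _ i j (le_refl _)⟩


/-- For every graph with no isolated vertex, `F(G) ≤ F_t(G) ≤ 2 F(G)`, and the
upper bound is attained by disjoint unions of `k` paths of order at least two,
where `F = k` and `F_t = 2k`. -/
theorem forcing_totalForcing_bounds :
    (∀ (V : Type) [Fintype V] (G : SimpleGraph V), (∀ v, ∃ u, G.Adj u v) →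
      forcingNumber G ≤ totalForcingNumber G ∧
        totalForcingNumber G ≤ 2 * forcingNumber G) ∧
    (∀ (k : ℕ) (n : Fin k → ℕ), (∀ i, 2 ≤ n i) →
      forcingNumber (disjointPaths k n) = k ∧
        totalForcingNumber (disjointPaths k n) = 2 * k) := by
  classical
  constructor
  · intro V _ G hG
    have huniv : (Finset.univ : Finset V).card ∈
        {m | ∃ F : Finset V, F.card = m ∧ IsTotalForcingSet G ↑F} := by
      refine ⟨Finset.univ, rfl, fun v => ⟨0, by simp [coloredAt]⟩, fun v _ => ?_⟩
      obtain ⟨u, hu⟩ := hG v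
      exact ⟨u, by simp, hu⟩
    have hneT : {m | ∃ F : Finset V, F.card = m ∧ IsTotalForcingSet G ↑F}.Nonempty :=
      ⟨_, huniv⟩
    have hneF : {m | ∃ F : Finset V, F.card = m ∧ IsForcingSet G ↑F}.Nonempty := by
      obtain ⟨m, F, hc, hF⟩ := hneT
      exact ⟨m, F, hc, hF.1⟩
    constructor
    · obtain ⟨T, hTc, hTt⟩ := Nat.sInf_mem hneT
      exact Nat.sInf_le ⟨T, hTc, hTt.1⟩
    · obtain ⟨S, hSc, hSf⟩ := Nat.sInf_mem hneF
      choose f hf using hG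
      set T : Finset V := S ∪ S.image f with hT
      have hsub : (↑S : Set V) ⊆ ↑T := by
        intro x hx
        simp only [hT, Finset.coe_union, Set.mem_union]
        exact Or.inl hx
      have hTtot : IsTotalForcingSet G ↑T := by
        refine ⟨isForcingSet_mono G hsub hSf, ?_⟩
        intro v hv
        simp only [hT, Finset.coe_union, Set.mem_union, Finset.mem_coe,
          Finset.mem_image] at hv ⊢
        rcases hv with hv | ⟨w, hw, rfl⟩
        · exact ⟨f v, Or.inr ⟨v, hv, rfl⟩, hf v⟩
        · exact ⟨w, Or.inl hw, (hf w).symm⟩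
      have h1 : totalForcingNumber G ≤ T.card := Nat.sInf_le ⟨T, rfl, hTtot⟩
      have h2 : T.card ≤ 2 * forcingNumber G := by
        calc T.card ≤ S.card + (S.image f).card := Finset.card_union_le _ _
          _ ≤ S.card + S.card := by
              exact Nat.add_le_add_left (Finset.card_image_le) _
          _ = 2 * forcingNumber G := by rw [hSc, forcingNumber, two_mul]
      exact le_trans h1 h2
  · intro k n hn
    have hpos : ∀ i, 0 < n i := fun i => lt_of_lt_of_le two_pos (hn i)
    -- the set of path starts
    set S : Finset (Σ i, Fin (n i)) :=
      Finset.univ.image (fun i : Fin k => ⟨i, ⟨0, hpos i⟩⟩) with hS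
    have hSinj : Function.Injective (fun i : Fin k => (⟨i, ⟨0, hpos i⟩⟩ : Σ i, Fin (n i))) := by
      intro a b hab
      exact congrArg Sigma.fst hab
    have hScard : S.card = k := by
      rw [hS, Finset.card_image_of_injective _ hSinj, Finset.card_univ, Fintype.card_fin]
    have hSforce : IsForcingSet (disjointPaths k n) ↑S := by
      refine paths_forced (fun i h => ?_)
      simp only [hS, Finset.coe_image, Finset.coe_univ, Set.image_univ, Set.mem_range]
      exact ⟨i, rfl⟩
    -- the set of first two vertices of each path
    set T : Finset (Σ i, Fin (n i)) :=
      Finset.univ.image (fun p : Fin k × Fin 2 =>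
        ⟨p.1, ⟨(p.2 : ℕ), lt_of_lt_of_le p.2.isLt (hn p.1)⟩⟩) with hTd
    have hTinj : Function.Injective (fun p : Fin k × Fin 2 =>
        (⟨p.1, ⟨(p.2 : ℕ), lt_of_lt_of_le p.2.isLt (hn p.1)⟩⟩ : Σ i, Fin (n i))) := by
      rintro ⟨a1, a2⟩ ⟨b1, b2⟩ hab
      obtain rfl : a1 = b1 := congrArg Sigma.fst hab
      simp only [Sigma.mk.inj_iff, heq_eq_eq, true_and] at hab
      have hv2 := congrArg Fin.val hab
      exact Prod.ext rfl (Fin.ext (by simpa using hv2))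
    have hTcard : T.card = 2 * k := by
      rw [hTd, Finset.card_image_of_injective _ hTinj, Finset.card_univ]
      simp [Nat.mul_comm]
    have hTmem : ∀ (i : Fin k) (b : ℕ) (hb : b < 2),
        (⟨i, ⟨b, lt_of_lt_of_le hb (hn i)⟩⟩ : Σ i, Fin (n i)) ∈ T := by
      intro i b hb
      rw [hTd, Finset.mem_image]
      exact ⟨(i, ⟨b, hb⟩), Finset.mem_univ _, rfl⟩
    have hTtot : IsTotalForcingSet (disjointPaths k n) ↑T := by
      constructor
      · refine paths_forced (fun i h => ?_)
        have := hTmem i 0 two_pos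
        rwa [Finset.mem_coe]
      · intro v hv
        rw [Finset.mem_coe, hTd, Finset.mem_image] at hv
        obtain ⟨⟨i, b⟩, -, rfl⟩ := hv
        have hb2 := b.isLt
        rcases (by omega : (b : ℕ) = 0 ∨ (b : ℕ) = 1) with hb | hb
        · refine ⟨⟨i, ⟨1, lt_of_lt_of_le one_lt_two (hn i)⟩⟩, ?_, ?_⟩
          · exact Finset.mem_coe.mpr (hTmem i 1 one_lt_two)
          · rw [disjointPaths_adj]
            constructor
            · intro hcon
              have := congrArg (fun x => (x.2 : ℕ)) hcon
              simp [hb] at this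
            · exact Or.inr ⟨rfl, by simp [hb]⟩
        · refine ⟨⟨i, ⟨0, hpos i⟩⟩, ?_, ?_⟩
          · exact Finset.mem_coe.mpr (hTmem i 0 two_pos)
          · rw [disjointPaths_adj]
            constructor
            · intro hcon
              have := congrArg (fun x => (x.2 : ℕ)) hcon
              simp [hb] at this
            · exact Or.inl ⟨rfl, by simp [hb]⟩
    constructor
    · refine le_antisymm (Nat.sInf_le ⟨S, hScard, hSforce⟩) (le_csInf ⟨k, S, hScard, hSforce⟩ ?_)
      rintro m ⟨F, rfl, hF⟩
      have hfib : F.card = ∑ i : Fin k, (F.filter (fun v => v.1 = i)).card :=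
        Finset.card_eq_sum_card_fiberwise (fun v _ => Finset.mem_univ v.1)
      rw [hfib]
      calc k = ∑ _i : Fin k, 1 := by simp
        _ ≤ ∑ i : Fin k, (F.filter (fun v => v.1 = i)).card := by
            refine Finset.sum_le_sum (fun i _ => ?_)
            obtain ⟨v, hv, hvi⟩ := forcing_hits hF i (hpos i)
            exact Finset.card_pos.mpr ⟨v, Finset.mem_filter.mpr ⟨Finset.mem_coe.mp hv, hvi⟩⟩
    · refine le_antisymm (Nat.sInf_le ⟨T, hTcard, hTtot⟩)
        (le_csInf ⟨2 * k, T, hTcard, hTtot⟩ ?_)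
      rintro m ⟨F, rfl, hF⟩
      have hfib : F.card = ∑ i : Fin k, (F.filter (fun v => v.1 = i)).card :=
        Finset.card_eq_sum_card_fiberwise (fun v _ => Finset.mem_univ v.1)
      rw [hfib]
      calc 2 * k = ∑ _i : Fin k, 2 := by simp [Nat.mul_comm]
        _ ≤ ∑ i : Fin k, (F.filter (fun v => v.1 = i)).card := by
            refine Finset.sum_le_sum (fun i _ => ?_)
            obtain ⟨v, hv, hvi⟩ := forcing_hits hF.1 i (hpos i)
            obtain ⟨u, hu, hadj⟩ := hF.2 v hv
            have hui : u.1 = i := (disjointPaths_adj_fst hadj).trans hvi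
            have hne : u ≠ v := hadj.ne
            exact Finset.one_lt_card.mpr
              ⟨u, Finset.mem_filter.mpr ⟨Finset.mem_coe.mp hu, hui⟩,
               v, Finset.mem_filter.mpr ⟨Finset.mem_coe.mp hv, hvi⟩, hne⟩
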